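/- arXiv:1903.02287 — 2 statements merged into one kernel-verified Lean document; each statement's English description precedes it below -/
import Mathlib

section
/- Let R be a finite commutative ring that is not a field. Then the nil clean divisor graph G_N(R) is connected with diameter at most 3: for any two vertices x, y there is a path of length at most 3 between them. -/
/-!
If some `c ∈ R` is neither nilpotent nor a unit, then, `R` being finite, some power of `c` is an
idempotent `e ∉ {0, 1}`. For any `x` and any nonzero idempotent `f` there is a nonzero `z ∈ fR`
with `xz` nil clean: if `(fx)^(k+1)` is idempotent, take `z = f x^k`, or `z = f` when this
vanishes, since then `fx` is nilpotent. Choosing such an `a ∈ eR` for `x` and `b ∈ (1 - e)R`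
for `y` gives `ab = 0`, hence the walk `x - a - b - y`, shortened when `x = a` or `b = y`.

Otherwise every element is nilpotent or a unit, and as `R` is not a field it has a nonzero
nilpotent `n`. Then either `xy` is nil clean, or `x` and `y` are units and `x - n - y`.
-/

def IsNilCleanElem {R : Type*} [CommRing R] (x : R) : Prop :=
  ∃ e n : R, IsIdempotentElem e ∧ IsNilpotent n ∧ x = e + n

def NCVertex {R : Type*} [CommRing R] (x : R) : Prop :=
  x ≠ 0 ∧ ∃ y : R, y ≠ 0 ∧ y ≠ x ∧ IsNilCleanElem (x * y)

def NCAdj {R : Type*} [CommRing R] (x y : R) : Prop :=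
  x ≠ y ∧ NCVertex x ∧ NCVertex y ∧ IsNilCleanElem (x * y)

/-- A finite monoid is a compact semigroup for the discrete topology. -/
theorem exists_isIdempotentElem_pow {M : Type*} [Monoid M] [Finite M] (a : M) :
    ∃ n : ℕ, IsIdempotentElem (a ^ (n + 1)) := by
  let _ : TopologicalSpace M := ⊥
  have : DiscreteTopology M := ⟨rfl⟩
  obtain ⟨_, ⟨n, rfl⟩, hn⟩ := exists_idempotent_in_compact_subsemigroup
    (fun _ ↦ continuous_of_discreteTopology) (Set.range fun n : ℕ ↦ a ^ (n + 1))
    (Set.range_nonempty _) (Set.toFinite _).isCompact (by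
      rintro _ ⟨i, rfl⟩ _ ⟨j, rfl⟩
      exact ⟨i + j + 1, by rw [← pow_add]; ring_nf⟩)
  exact ⟨n, hn⟩

section NilClean

variable {R : Type*} [CommRing R]

lemma IsIdempotentElem.isNilCleanElem {e : R} (he : IsIdempotentElem e) : IsNilCleanElem e :=
  ⟨e, 0, he, IsNilpotent.zero, (add_zero e).symm⟩

lemma IsNilpotent.isNilCleanElem {n : R} (hn : IsNilpotent n) : IsNilCleanElem n :=
  ⟨0, n, IsIdempotentElem.zero, hn, (zero_add n).symm⟩

lemma NCAdj.symm {x y : R} (h : NCAdj x y) : NCAdj y x :=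
  ⟨h.1.symm, h.2.2.1, h.2.1, mul_comm x y ▸ h.2.2.2⟩

lemma ncAdj_of_mul_eq_zero {a b : R} (ha : a ≠ 0) (hb : b ≠ 0) (hab : a ≠ b) (h : a * b = 0) :
    NCAdj a b :=
  have hab0 : IsNilCleanElem (a * b) := h ▸ IsIdempotentElem.zero.isNilCleanElem
  ⟨hab, ⟨ha, b, hb, hab.symm, hab0⟩, ⟨hb, a, ha, hab, mul_comm a b ▸ hab0⟩, hab0⟩

def NCWithinThree (x y : R) : Prop :=
  NCAdj x y ∨ (∃ a : R, NCAdj x a ∧ NCAdj a y) ∨ (∃ a b : R, NCAdj x a ∧ NCAdj a b ∧ NCAdj b y)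

lemma ncWithinThree_of_ncAdj {x a b y : R} (hab : NCAdj a b) (hxa : x = a ∨ NCAdj x a)
    (hby : b = y ∨ NCAdj b y) : NCWithinThree x y := by
  rcases hxa with rfl | hxa <;> rcases hby with rfl | hby
  exacts [Or.inl hab, Or.inr (Or.inl ⟨b, hab, hby⟩), Or.inr (Or.inl ⟨a, hxa, hab⟩),
    Or.inr (Or.inr ⟨a, b, hxa, hab, hby⟩)]

lemma exists_ne_zero_isNilpotent_of_not_isField [Nontrivial R] (hF : ¬IsField R)
    (h : ∀ a : R, IsNilpotent a ∨ IsUnit a) : ∃ n : R, n ≠ 0 ∧ IsNilpotent n := by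
  by_contra! hn
  exact hF ⟨exists_pair_ne R, mul_comm, fun ha ↦ ((h _).resolve_left (hn _ ha)).exists_right_inv⟩

lemma ncWithinThree_of_forall_isNilpotent_or_isUnit [Nontrivial R]
    (h : ∀ a : R, IsNilpotent a ∨ IsUnit a) {n : R} (hn0 : n ≠ 0) (hn : IsNilpotent n)
    {x y : R} (hx : NCVertex x) (hy : NCVertex y) (hxy : x ≠ y) : NCWithinThree x y := by
  by_cases hxy' : IsNilCleanElem (x * y)
  · exact Or.inl ⟨hxy, hx, hy, hxy'⟩
  have hxu : IsUnit x := (h x).resolve_left fun hxn ↦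
    hxy' ((Commute.all x y).isNilpotent_mul_right hxn).isNilCleanElem
  have hyu : IsUnit y := (h y).resolve_left fun hyn ↦
    hxy' ((Commute.all x y).isNilpotent_mul_left hyn).isNilCleanElem
  have hxn : x ≠ n := fun h ↦ hn.not_isUnit (h ▸ hxu)
  have hyn : y ≠ n := fun h ↦ hn.not_isUnit (h ▸ hyu)
  have hnv : NCVertex n :=
    ⟨hn0, x, hx.1, hxn, ((Commute.all n x).isNilpotent_mul_right hn).isNilCleanElem⟩
  exact Or.inr (Or.inl ⟨n,
    ⟨hxn, hx, hnv, ((Commute.all x n).isNilpotent_mul_left hn).isNilCleanElem⟩,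
    NCAdj.symm ⟨hyn, hy, hnv, ((Commute.all y n).isNilpotent_mul_left hn).isNilCleanElem⟩⟩)

variable [Finite R]

lemma exists_isIdempotentElem_ne_zero_ne_one {c : R} (hcn : ¬IsNilpotent c) (hcu : ¬IsUnit c) :
    ∃ e : R, IsIdempotentElem e ∧ e ≠ 0 ∧ e ≠ 1 := by
  obtain ⟨n, hn⟩ := exists_isIdempotentElem_pow c
  exact ⟨_, hn, fun h ↦ hcn ⟨_, h⟩,
    fun h ↦ hcu (IsUnit.of_mul_eq_one (c ^ n) (by rw [← pow_succ', h]))⟩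

lemma exists_ne_zero_isNilCleanElem_mul_of_isIdempotentElem {e : R} (he : IsIdempotentElem e)
    (he0 : e ≠ 0) (x : R) : ∃ z : R, z ≠ 0 ∧ e * z = z ∧ IsNilCleanElem (x * z) := by
  obtain ⟨n, hn⟩ := exists_isIdempotentElem_pow (e * x)
  have hpow : (e * x) ^ (n + 1) = x * (e * x ^ n) := by
    rw [mul_pow, he.pow_succ_eq, pow_succ]; ring
  by_cases hz : e * x ^ n = 0
  · refine ⟨e, he0, he, IsNilpotent.isNilCleanElem ⟨n + 1, ?_⟩⟩
    rw [mul_comm, hpow, hz, mul_zero]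
  · exact ⟨e * x ^ n, hz, by rw [← mul_assoc, he], hpow ▸ hn.isNilCleanElem⟩

lemma ncWithinThree_of_isIdempotentElem {e : R} (he : IsIdempotentElem e) (he0 : e ≠ 0)
    (he1 : e ≠ 1) {x y : R} (hx : NCVertex x) (hy : NCVertex y) : NCWithinThree x y := by
  obtain ⟨a, ha0, ha, hxa⟩ := exists_ne_zero_isNilCleanElem_mul_of_isIdempotentElem he he0 x
  obtain ⟨b, hb0, hb, hyb⟩ := exists_ne_zero_isNilCleanElem_mul_of_isIdempotentElem he.one_sub
    (sub_ne_zero.mpr he1.symm) y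
  have hab : a * b = 0 := by
    rw [← ha, ← hb, mul_mul_mul_comm, he.mul_one_sub_self, zero_mul]
  have hab' : a ≠ b := fun h ↦
    ha0 (by rw [← ha, h, ← hb, ← mul_assoc, he.mul_one_sub_self, zero_mul])
  have hadj : NCAdj a b := ncAdj_of_mul_eq_zero ha0 hb0 hab' hab
  refine ncWithinThree_of_ncAdj hadj ?_ ?_
  · exact or_iff_not_imp_left.mpr fun h ↦ ⟨h, hx, hadj.2.1, hxa⟩
  · exact or_iff_not_imp_left.mpr fun h ↦ NCAdj.symm ⟨Ne.symm h, hy, hadj.2.2.1, hyb⟩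

end NilClean

theorem stmt7 {R : Type*} [CommRing R] [Fintype R] [Nontrivial R]
    (hF : ¬ IsField R) :
    ∀ x y : R, NCVertex x → NCVertex y → x ≠ y →
      (NCAdj x y ∨ (∃ a : R, NCAdj x a ∧ NCAdj a y) ∨
        (∃ a b : R, NCAdj x a ∧ NCAdj a b ∧ NCAdj b y)) := by
  intro x y hx hy hxy
  by_cases hloc : ∀ a : R, IsNilpotent a ∨ IsUnit a
  · obtain ⟨n, hn0, hn⟩ := exists_ne_zero_isNilpotent_of_not_isField hF hloc
    exact ncWithinThree_of_forall_isNilpotent_or_isUnit hloc hn0 hn hx hy hxy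
  · obtain ⟨c, hcn, hcu⟩ : ∃ c : R, ¬IsNilpotent c ∧ ¬IsUnit c := by simpa using hloc
    obtain ⟨e, he, he0, he1⟩ := exists_isIdempotentElem_ne_zero_ne_one hcn hcu
    exact ncWithinThree_of_isIdempotentElem he he0 he1 hx hy
end

section
/- In ℤ/(2p) with p an odd prime, let a be an even element with a ∉ {0, p−1, p+1} (as residues). Then exactly 3 nonzero elements y ≠ a satisfy that a·y is nil clean; i.e., deg(a) = 3 in the nil clean divisor graph. -/
theorem IsNilCleanElem.map {R S F : Type*} [CommRing R] [CommRing S] [FunLike F R S]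
    [RingHomClass F R S] (f : F) {x : R} (hx : IsNilCleanElem x) : IsNilCleanElem (f x) := by
  obtain ⟨e, n, he, hn, rfl⟩ := hx
  exact ⟨f e, f n, he.map f, hn.map f, map_add f e n⟩

theorem RingEquiv.isNilCleanElem_iff {R S : Type*} [CommRing R] [CommRing S] (f : R ≃+* S)
    {x : R} : IsNilCleanElem (f x) ↔ IsNilCleanElem x :=
  ⟨fun h => by simpa using h.map f.symm, fun h => h.map f⟩

theorem isNilCleanElem_iff_isIdempotentElem {R : Type*} [CommRing R] [IsReduced R] {x : R} :
    IsNilCleanElem x ↔ IsIdempotentElem x := by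
  refine ⟨?_, fun hx => ⟨x, 0, hx, IsNilpotent.zero, (add_zero x).symm⟩⟩
  rintro ⟨e, n, he, hn, rfl⟩
  rwa [hn.eq_zero, add_zero]

theorem Prod.isIdempotentElem_iff {M N : Type*} [Mul M] [Mul N] {x : M × N} :
    IsIdempotentElem x ↔ IsIdempotentElem x.1 ∧ IsIdempotentElem x.2 :=
  Prod.ext_iff

theorem ZMod.two_cases : ∀ u : ZMod 2, u = 0 ∨ u = 1 := by
  decide

section

variable {K : Type*} [Field K]

theorem isNilCleanElem_zero_mk_mul_iff {α : K} (hα : α ≠ 0) (y : ZMod 2 × K) :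
    IsNilCleanElem ((0, α) * y) ↔ y.2 = 0 ∨ y.2 = α⁻¹ := by
  simp [isNilCleanElem_iff_isIdempotentElem, Prod.isIdempotentElem_iff, hα,
    mul_eq_one_iff_inv_eq₀ hα, eq_comm]

theorem ncard_setOf_isNilCleanElem_zero_mk_mul {α : K} (hα0 : α ≠ 0) (hα1 : α ≠ 1)
    (hαm1 : α ≠ -1) :
    {y : ZMod 2 × K | y ≠ 0 ∧ y ≠ (0, α) ∧ IsNilCleanElem ((0, α) * y)}.ncard = 3 := by
  have hinv : α⁻¹ ≠ α := fun h => by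
    have : α * α = 1 := by nth_rw 2 [← h]; exact mul_inv_cancel₀ hα0
    grind [mul_self_eq_one_iff]
  have hset : {y : ZMod 2 × K | y ≠ 0 ∧ y ≠ (0, α) ∧ IsNilCleanElem ((0, α) * y)} =
      {(1, 0), (0, α⁻¹), (1, α⁻¹)} := by
    ext ⟨u, v⟩
    simp only [Set.mem_ofPred_eq, isNilCleanElem_zero_mk_mul_iff hα0, Set.mem_insert_iff,
      Set.mem_singleton_iff, ne_eq, Prod.mk.injEq, Prod.mk_eq_zero]
    obtain rfl | rfl := ZMod.two_cases u
    · simp only [zero_ne_one, false_and, true_and, false_or, or_false]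
      exact ⟨fun h => h.2.2.resolve_left h.1,
        fun h => ⟨h ▸ inv_ne_zero hα0, h ▸ hinv, Or.inr h⟩⟩
    · simp
  rw [hset, Set.ncard_eq_three]
  exact ⟨_, _, _, by simp, by simpa using hα0.symm, by simp, rfl⟩

end

theorem ZMod.chineseRemainder_natCast {m n : ℕ} (h : m.Coprime n) (k : ℕ) :
    ZMod.chineseRemainder h k = ((k : ZMod m), (k : ZMod n)) := by
  rw [map_natCast]
  rfl

theorem ZMod.chineseRemainder_fst_eq_zero_of_even {p : ℕ} [NeZero p] (h : Nat.Coprime 2 p)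
    {a : ZMod (2 * p)} (ha : Even a.val) : (ZMod.chineseRemainder h a).1 = 0 := by
  rw [← ZMod.natCast_zmod_val a, ZMod.chineseRemainder_natCast]
  exact ZMod.natCast_eq_zero_iff_even.2 ha

theorem ZMod.chineseRemainder_natCast_self_of_odd {p : ℕ} (h : Nat.Coprime 2 p) (hodd : Odd p) :
    ZMod.chineseRemainder h p = (1, 0) := by
  rw [ZMod.chineseRemainder_natCast, ZMod.natCast_eq_one_iff_odd.2 hodd, ZMod.natCast_self]

theorem stmt14 (p : ℕ) (hp : p.Prime) (hodd : Odd p) (a : ZMod (2 * p))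
    (haeven : Even a.val) (ha0 : a ≠ 0)
    (ha1 : a ≠ (p : ZMod (2 * p)) - 1) (ha2 : a ≠ (p : ZMod (2 * p)) + 1) :
    Set.ncard {y : ZMod (2 * p) | y ≠ 0 ∧ y ≠ a ∧
      IsNilCleanElem (a * y)} = 3 := by
  have : Fact p.Prime := ⟨hp⟩
  have hcop : Nat.Coprime 2 p :=
    (Nat.coprime_primes Nat.prime_two hp).2 fun h => Nat.not_even_iff_odd.2 hodd (h ▸ even_two)
  set f := ZMod.chineseRemainder hcop
  set α := (f a).2
  have hfa : f a = (0, α) := Prod.ext (ZMod.chineseRemainder_fst_eq_zero_of_even hcop haeven) rfl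
  have hfp := ZMod.chineseRemainder_natCast_self_of_odd hcop hodd
  have hS : {y : ZMod (2 * p) | y ≠ 0 ∧ y ≠ a ∧ IsNilCleanElem (a * y)} =
      f ⁻¹' {y | y ≠ 0 ∧ y ≠ (0, α) ∧ IsNilCleanElem ((0, α) * y)} := by
    ext y
    simp only [Set.mem_ofPred_eq, Set.mem_preimage, ← hfa, ← map_mul, f.isNilCleanElem_iff,
      map_ne_zero_iff f f.injective, f.injective.ne_iff]
  rw [hS, Set.ncard_preimage_of_injective_subset_range f.injective (by simp)]
  refine ncard_setOf_isNilCleanElem_zero_mk_mul ?_ ?_ ?_ <;> intro hα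
  · exact ha0 (f.injective (by rw [hfa, hα, map_zero]; rfl))
  · refine ha2 (f.injective ?_)
    rw [hfa, hα, map_add, hfp, map_one]
    ext
    · exact (CharTwo.add_self_eq_zero (1 : ZMod 2)).symm
    · simp
  · refine ha1 (f.injective ?_)
    rw [hfa, hα, map_sub, hfp, map_one]
    ext <;> simp
end
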